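/- If G : X → A is a conditional expectation, h = G(p) and k = G(q) = 1 − h, then hka = φ²(a)hk for every a ∈ A. -/

import Mathlib

/-!
Applying `G` to the Peirce decomposition `p a = E(a) p + (a - F a) q` gives the twisted commutation
rule `h a = φ(a) h + (a - F a)` for `h = G p`, with `k = G q = 1 - h`. Since `E` and `F` are
idempotent (by injectivity of `a ↦ a p` and `a ↦ a q`), using this rule twice to move `a` to the
left of `h k = h - h²` leaves only `φ²(a) h k`.
-/

open TensorProduct

/-- The linear map `A ⊗[R] B → X`, `a ⊗ b ↦ i a * j b`. -/
noncomputable def blendMul (R : Type*) {A B X : Type*} [CommRing R] [Ring A] [Ring B] [Ring X]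
    [Algebra R A] [Algebra R B] [Algebra R X] (i : A →ₐ[R] X) (j : B →ₐ[R] X) :
    A ⊗[R] B →ₗ[R] X :=
  (LinearMap.mul' R X).comp (TensorProduct.map i.toLinearMap j.toLinearMap)

section BlendMul

variable {R A B X : Type*} [CommRing R] [Ring A] [Ring B] [Ring X]
  [Algebra R A] [Algebra R B] [Algebra R X]

@[simp]
lemma blendMul_tmul (i : A →ₐ[R] X) (j : B →ₐ[R] X) (a : A) (b : B) :
    blendMul R i j (a ⊗ₜ b) = i a * j b := rfl

lemma injective_mul_of_injective_blendMul {i : A →ₐ[R] X} {j : B →ₐ[R] X}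
    (hij : Function.Injective (blendMul R i j)) (f : B →ₗ[R] R) {b : B} (hb : f b = 1) :
    Function.Injective fun a ↦ i a * j b := by
  intro a a' h
  have htmul : a ⊗ₜ[R] b = a' ⊗ₜ[R] b := hij (by simpa using h)
  simpa [hb] using congrArg (fun t ↦ TensorProduct.rid R A (f.lTensor A t)) htmul

end BlendMul

lemma apply_apply_of_mul_mul_eq {A X : Type*} [Semigroup X] {i : A → X} {p : X} (hpp : p * p = p)
    (hinj : Function.Injective fun a ↦ i a * p) {E : A → A}
    (hE : ∀ a, p * i a * p = i (E a) * p) (a : A) :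
    E (E a) = E a :=
  hinj <| show i (E (E a)) * p = i (E a) * p by
    rw [← hE, mul_assoc, ← hE, ← mul_assoc, ← mul_assoc, hpp]

lemma mul_map_eq_of_corners {R A X : Type*} [CommRing R] [Ring A] [Ring X]
    [Algebra R A] [Algebra R X] (i : A →ₐ[R] X) {p q : X} (hpq : p + q = 1) {E F : A → A}
    (hE : ∀ a, p * i a * p = i (E a) * p) (hF : ∀ a, q * i a * q = i (F a) * q) (a : A) :
    p * i a = i (E a) * p + i (a - F a) * q := by
  obtain rfl : p = 1 - q := eq_sub_of_add_eq hpq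
  calc (1 - q) * i a = (1 - q) * i a * (1 - q) + (i a * q - q * i a * q) := by noncomm_ring
    _ = i (E a) * (1 - q) + i (a - F a) * q := by rw [hE, hF, map_sub, sub_mul]

lemma mul_one_sub_mul_eq_of_mul_eq {A : Type*} [Ring A] {E F : A →+ A}
    (hE : ∀ a, E (E a) = E a) (hF : ∀ a, F (F a) = F a) {h : A}
    (hh : ∀ a, h * a = E a * h + (a - F a) * (1 - h)) (a : A) :
    h * (1 - h) * a =
      (E (E a + F a - a) + F (E a + F a - a) - (E a + F a - a)) * (h * (1 - h)) := by
  have key : ∀ x, h * x = (E x + F x - x) * h + (x - F x) := fun x ↦ by rw [hh]; noncomm_ring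
  have hFa : h * F a = E (F a) * h := by rw [key, hF]; noncomm_ring
  have hφa : h * (E a + F a - a) =
      (E (F a) + F (E a) - (E a + F a - a)) * h + (E a + F a - a - F (E a)) := by
    rw [key]; simp only [map_add, map_sub, hE, hF]; noncomm_ring
  calc h * (1 - h) * a = h * a - h * (h * a) := by noncomm_ring
    _ = (E (F a) + F (E a) - (E a + F a - a)) * (h * (1 - h)) := by
      rw [key a, mul_add, ← mul_assoc, hφa, mul_sub, hFa, key a]; noncomm_ring
    _ = _ := by simp only [map_add, map_sub, hE, hF]; congr 1; abel

theorem stmt12_general {R A X : Type*} [CommRing R] [Ring A] [Ring X] [Algebra R A] [Algebra R X]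
    (i : A →ₐ[R] X) (j : (R × R) →ₐ[R] X)
    (h1 : Function.Bijective (blendMul R i j))
    (p q : X) (hp : p = j (1, 0)) (hq : q = j (0, 1))
    (E F : A →ₗ[R] A)
    (hE : ∀ a : A, p * i a * p = i (E a) * p)
    (hF : ∀ a : A, q * i a * q = i (F a) * q)
    (G : X →ₗ[R] A)
    (hG1 : ∀ (a : A) (x : X), G (i a * x) = a * G x)
    (hG2 : ∀ (x : X) (a : A), G (x * i a) = G x * a)
    (hG3 : ∀ a : A, G (i a) = a) :
    G q = 1 - G p ∧
    ∀ a : A, G p * G q * a =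
      (E (E a + F a - a) + F (E a + F a - a) - (E a + F a - a)) * (G p * G q) := by
  subst hp hq
  have hpq : j (1, 0) + j (0, 1) = 1 := by rw [← map_add, Prod.mk_add_mk, add_zero, zero_add]; exact map_one j
  have hGq : G (j (0, 1)) = 1 - G (j (1, 0)) := by
    rw [eq_sub_iff_add_eq', ← map_add, hpq, ← map_one i, hG3]
  have hEE := apply_apply_of_mul_mul_eq (by rw [← map_mul]; simp)
    (injective_mul_of_injective_blendMul h1.1 (LinearMap.fst R R R) rfl) hE
  have hFF := apply_apply_of_mul_mul_eq (by rw [← map_mul]; simp)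
    (injective_mul_of_injective_blendMul h1.1 (LinearMap.snd R R R) rfl) hF
  refine ⟨hGq, fun a ↦ ?_⟩
  rw [hGq]
  refine mul_one_sub_mul_eq_of_mul_eq (E := E.toAddMonoidHom) (F := F.toAddMonoidHom) hEE hFF
    (fun b ↦ ?_) a
  have hpb := congrArg G (mul_map_eq_of_corners i hpq hE hF b)
  rwa [hG2, map_add, hG1, hG1, hGq] at hpb

theorem stmt12 {R A X : Type*} [CommRing R] [Ring A] [Ring X] [Algebra R A] [Algebra R X]
    (i : A →ₐ[R] X) (j : (R × R) →ₐ[R] X)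
    (h1 : Function.Bijective (blendMul R i j)) (h2 : Function.Bijective (blendMul R j i))
    (p q : X) (hp : p = j (1, 0)) (hq : q = j (0, 1))
    (E F : A →ₗ[R] A)
    (hE : ∀ a : A, p * i a * p = i (E a) * p)
    (hF : ∀ a : A, q * i a * q = i (F a) * q)
    (G : X →ₗ[R] A)
    (hG1 : ∀ (a : A) (x : X), G (i a * x) = a * G x)
    (hG2 : ∀ (x : X) (a : A), G (x * i a) = G x * a)
    (hG3 : ∀ a : A, G (i a) = a) :
    G q = 1 - G p ∧
    ∀ a : A, G p * G q * a =
      (E (E a + F a - a) + F (E a + F a - a) - (E a + F a - a)) * (G p * G q) :=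
  stmt12_general i j h1 p q hp hq E F hE hF G hG1 hG2 hG3
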